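/- Let 2 < α < 4, c > 0 and 0 < β ≤ 1. On a probability space, let {(Q_k, h_k, T_k)}_{k≥2} be a mutually independent family of random variables where Q_k has the Gamma distribution with shape k and rate c/β, h_k is exponential with mean 1, and T_k is Bernoulli with P(T_k = 1) = β. Then the random series I = Σ_{k=2}^∞ Q_k^{−α/2} h_k T_k converges almost surely and E[I] = −c^{α/2} β^{1−α/2} Γ(1 − α/2), where Γ denotes the Gamma function (analytically continued to the negative non-integer argument 1 − α/2 ∈ (−1, 0), where it is negative, so E[I] > 0). Equivalently, c ∫₀^∞ q^{−α/2} (1 − e^{−(c/β)q}) dq = −c^{α/2} β^{1−α/2} Γ(1 − α/2). -/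

import Mathlib

/-!
Write `r = c / β` and `s = α / 2 ∈ (1, 2)`. The densities of `Gamma(k, r)`, `k ≥ 2`, sum to
`r (1 - e^{-rq})` on `(0, ∞)`: the exponential series of `rq` without its constant term. Hence,
by independence and Tonelli, `E[I] = β ∫ q^{-s} r (1 - e^{-rq}) dq = c ∫ q^{-s} (1 - e^{-rq}) dq`,
which is finite because `1 < s < 2`; so `I` converges almost surely. One integration by parts
turns the last integral into `r / (s - 1) · ∫ q^{1-s} e^{-rq} dq = r^{s-1} Γ(2 - s) / (s - 1)`,
and `Γ(2 - s) = (1 - s) Γ(1 - s)` gives the closed form.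
-/

open Real MeasureTheory ProbabilityTheory Set
open Filter Topology
open scoped Nat ENNReal

lemma hasSum_gammaPDFReal_nat_add_two {r x : ℝ} (hx : 0 ≤ x) :
    HasSum (fun k : ℕ => gammaPDFReal (k + 2) r x) (r * (1 - exp (-r * x))) := by
  have hexp : HasSum (fun k : ℕ => (r * x) ^ (k + 1) / ((k + 1)! : ℝ)) (exp (r * x) - 1) := by
    simpa [Real.exp_eq_exp_ℝ] using
      (hasSum_nat_add_iff' 1).mpr (NormedSpace.expSeries_div_hasSum_exp (r * x))
  rw [show r * (1 - exp (-r * x)) = r * exp (-(r * x)) * (exp (r * x) - 1) by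
    rw [neg_mul, mul_assoc, mul_sub (exp _), ← exp_add, neg_add_cancel, exp_zero]; ring]
  refine (hexp.mul_left (r * exp (-(r * x)))).congr_fun fun k => ?_
  have hΓ : Gamma ((k : ℝ) + 2) = ((k + 1)! : ℝ) := by
    rw [show (k : ℝ) + 2 = ((k + 1 : ℕ) : ℝ) + 1 by push_cast; ring, Gamma_nat_eq_factorial]
  rw [gammaPDFReal, if_pos hx, hΓ, show (k : ℝ) + 2 = ((k + 2 : ℕ) : ℝ) by push_cast; ring,
    show ((k + 2 : ℕ) : ℝ) - 1 = ((k + 1 : ℕ) : ℝ) by push_cast; ring, rpow_natCast,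
    rpow_natCast, mul_pow]
  ring

lemma tsum_gammaPDF_nat_add_two {r : ℝ} (hr : 0 < r) (x : ℝ) :
    ∑' k : ℕ, gammaPDF (k + 2) r x = ENNReal.ofReal (r * (1 - exp (-r * x))) := by
  rcases le_or_gt 0 x with hx | hx
  · have hsum := hasSum_gammaPDFReal_nat_add_two (r := r) hx
    simp only [gammaPDF]
    rw [← ENNReal.ofReal_tsum_of_nonneg (fun k => gammaPDFReal_nonneg (by positivity) hr x)
      hsum.summable, hsum.tsum_eq]
  · -- `ofReal` truncates the negative value `r (1 - e^{-rx})` to `0`.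
    have hneg : r * (1 - exp (-(r * x))) ≤ 0 :=
      mul_nonpos_of_nonneg_of_nonpos hr.le (by nlinarith [add_one_le_exp (-(r * x))])
    simp [gammaPDF_of_neg hx, hneg]

lemma sum_gammaMeasure_nat_add_two {r : ℝ} (hr : 0 < r) :
    Measure.sum (fun k : ℕ => gammaMeasure (k + 2) r)
      = volume.withDensity fun x => ENNReal.ofReal (r * (1 - exp (-r * x))) := by
  have hdens : (fun x => ENNReal.ofReal (r * (1 - exp (-r * x))))
      = ∑' k : ℕ, gammaPDF (k + 2) r := by
    ext x
    rw [ENNReal.tsum_apply, tsum_gammaPDF_nat_add_two hr]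
  rw [hdens, withDensity_tsum (f := fun k : ℕ => gammaPDF (k + 2) r)
    fun k => (measurable_gammaPDFReal _ r).ennreal_ofReal]
  rfl

lemma one_sub_exp_neg_mul_mem_Icc {r q : ℝ} (hr : 0 ≤ r) (hq : 0 ≤ q) :
    1 - exp (-r * q) ∈ Icc 0 (min 1 (r * q)) := by
  have hle : exp (-r * q) ≤ 1 := exp_le_one_iff.mpr (by nlinarith)
  refine ⟨by linarith, le_min (by linarith [exp_pos (-r * q)]) ?_⟩
  linarith [add_one_le_exp (-r * q)]

lemma integrableOn_rpow_neg_mul_one_sub_exp {s r : ℝ} (hs1 : 1 < s) (hs2 : s < 2) (hr : 0 < r) :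
    IntegrableOn (fun q : ℝ => q ^ (-s) * (1 - exp (-r * q))) (Ioi 0) := by
  have hmeas : AEStronglyMeasurable (fun q : ℝ => q ^ (-s) * (1 - exp (-r * q))) volume := by
    fun_prop
  rw [← Ioc_union_Ioi_eq_Ioi zero_le_one]
  refine IntegrableOn.union ?_ ?_
  · refine Integrable.mono' (((intervalIntegral.intervalIntegrable_rpow'
      (r := 1 - s) (by linarith)).1).const_mul r) hmeas.restrict ?_
    filter_upwards [ae_restrict_mem measurableSet_Ioc] with q ⟨hq, _⟩
    obtain ⟨h0, h1⟩ := one_sub_exp_neg_mul_mem_Icc hr.le hq.le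
    rw [norm_of_nonneg (by positivity), rpow_sub hq, rpow_one, rpow_neg hq.le]
    calc (q ^ s)⁻¹ * (1 - exp (-r * q)) ≤ (q ^ s)⁻¹ * (r * q) :=
          mul_le_mul_of_nonneg_left (h1.trans (min_le_right _ _)) (by positivity)
      _ = r * (q / q ^ s) := by ring
  · refine Integrable.mono' (integrableOn_Ioi_rpow_of_lt (a := -s) (by linarith) one_pos)
      hmeas.restrict ?_
    filter_upwards [ae_restrict_mem measurableSet_Ioi] with q hq
    have hq0 : 0 < q := zero_lt_one.trans hq
    obtain ⟨h0, h1⟩ := one_sub_exp_neg_mul_mem_Icc hr.le hq0.le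
    rw [norm_of_nonneg (by positivity)]
    exact mul_le_of_le_one_right (by positivity) (h1.trans (min_le_left _ _))

lemma tendsto_one_sub_exp_neg_mul_mul_rpow_nhdsGT_zero {s r : ℝ} (hs2 : s < 2) (hr : 0 ≤ r) :
    Tendsto (fun q : ℝ => (1 - exp (-r * q)) * q ^ (1 - s)) (𝓝[>] 0) (𝓝 0) := by
  have hpow : Tendsto (fun q : ℝ => r * q ^ (2 - s)) (𝓝[>] 0) (𝓝 0) := by
    have := ((continuousAt_rpow_const 0 (2 - s) (Or.inr (by linarith))).tendsto.const_mul r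
      |>.mono_left (nhdsWithin_le_nhds (s := Ioi 0)))
    rwa [zero_rpow (by linarith), mul_zero] at this
  refine squeeze_zero_norm' ?_ hpow
  filter_upwards [self_mem_nhdsWithin] with q (hq : 0 < q)
  obtain ⟨h0, h1⟩ := one_sub_exp_neg_mul_mem_Icc hr hq.le
  rw [norm_of_nonneg (by positivity), show 2 - s = 1 + (1 - s) by ring,
    rpow_one_add' hq.le (by linarith), ← mul_assoc]
  exact mul_le_mul_of_nonneg_right (h1.trans (min_le_right _ _)) (by positivity)

lemma tendsto_one_sub_exp_neg_mul_mul_rpow_atTop {s r : ℝ} (hs1 : 1 < s) (hr : 0 ≤ r) :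
    Tendsto (fun q : ℝ => (1 - exp (-r * q)) * q ^ (1 - s)) atTop (𝓝 0) := by
  have hpow : Tendsto (fun q : ℝ => q ^ (1 - s)) atTop (𝓝 0) := by
    simpa using tendsto_rpow_neg_atTop (y := s - 1) (by linarith)
  refine squeeze_zero_norm' ?_ hpow
  filter_upwards [eventually_gt_atTop 0] with q hq
  obtain ⟨h0, h1⟩ := one_sub_exp_neg_mul_mem_Icc hr hq.le
  rw [norm_of_nonneg (by positivity)]
  exact mul_le_of_le_one_left (by positivity) (h1.trans (min_le_left _ _))

lemma integral_rpow_neg_mul_one_sub_exp {s r : ℝ} (hs1 : 1 < s) (hs2 : s < 2) (hr : 0 < r) :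
    ∫ q in Ioi 0, q ^ (-s) * (1 - exp (-r * q)) = -(r ^ (s - 1) * Gamma (1 - s)) := by
  have h1s : 1 - s ≠ 0 := by linarith
  have hu : ∀ q ∈ Ioi (0 : ℝ), HasDerivAt (fun q => 1 - exp (-r * q)) (r * exp (-r * q)) q :=
    fun q _ => (((hasDerivAt_id q).const_mul (-r)).exp.const_sub 1).congr_deriv (by simp; ring)
  have hv : ∀ q ∈ Ioi (0 : ℝ), HasDerivAt (fun q => q ^ (1 - s) / (1 - s)) (q ^ (-s)) q :=
    fun q hq => ((hasDerivAt_rpow_const (Or.inl (ne_of_gt hq))).div_const (1 - s)).congr_deriv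
      (by rw [sub_sub_cancel_left, mul_div_cancel_left₀ _ h1s])
  have hgammaInt : IntegrableOn (fun q : ℝ => q ^ (1 - s) * exp (-r * q)) (Ioi 0) := by
    simpa using integrableOn_rpow_mul_exp_neg_mul_rpow (p := 1) (by linarith) one_pos hr
  have hboundary : ∀ l, Tendsto (fun q : ℝ => (1 - exp (-r * q)) * q ^ (1 - s)) l (𝓝 0) →
      Tendsto ((fun q => 1 - exp (-r * q)) * fun q => q ^ (1 - s) / (1 - s)) l (𝓝 0) :=
    fun l h => by simpa [mul_div_assoc, Pi.mul_def] using h.div_const (1 - s)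
  have hibp := integral_Ioi_mul_deriv_eq_deriv_mul hu hv
    ((integrableOn_rpow_neg_mul_one_sub_exp hs1 hs2 hr).congr_fun (fun q _ => mul_comm _ _)
      measurableSet_Ioi)
    (IntegrableOn.congr_fun (Integrable.const_mul hgammaInt (r / (1 - s)))
      (fun q _ => by simp only [Pi.mul_apply]; ring) measurableSet_Ioi)
    (hboundary _ (tendsto_one_sub_exp_neg_mul_mul_rpow_nhdsGT_zero hs2 hr.le))
    (hboundary _ (tendsto_one_sub_exp_neg_mul_mul_rpow_atTop hs1 hr.le))
  have hgamma : ∫ q in Ioi 0, r * exp (-r * q) * (q ^ (1 - s) / (1 - s))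
      = r ^ (s - 1) * Gamma (1 - s) := by
    calc _ = r / (1 - s) * ∫ q in Ioi 0, q ^ ((2 - s) - 1) * exp (-(r * q)) := by
          rw [← integral_const_mul]
          refine setIntegral_congr_fun measurableSet_Ioi fun q _ => ?_
          rw [show 2 - s - 1 = 1 - s by ring, neg_mul]
          ring
      _ = r / (1 - s) * ((1 / r) ^ (2 - s) * Gamma (2 - s)) := by
          rw [integral_rpow_mul_exp_neg_mul_Ioi (by linarith) hr]
      _ = _ := by
          rw [show 2 - s = (1 - s) + 1 by ring, Gamma_add_one h1s, one_div, inv_rpow hr.le,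
            ← rpow_neg hr.le, show s - 1 = 1 + -(1 - s + 1) by ring, rpow_add hr, rpow_one]
          field_simp
  rw [hgamma, sub_zero, zero_sub] at hibp
  rw [← hibp]
  exact setIntegral_congr_fun measurableSet_Ioi fun q _ => mul_comm _ _

lemma mul_integral_rpow_neg_mul_one_sub_exp_div {s c β : ℝ} (hs1 : 1 < s) (hs2 : s < 2)
    (hc : 0 < c) (hβ : 0 < β) :
    c * ∫ q in Ioi 0, q ^ (-s) * (1 - exp (-(c / β) * q))
      = -(c ^ s * β ^ (1 - s) * Gamma (1 - s)) := by
  rw [integral_rpow_neg_mul_one_sub_exp hs1 hs2 (div_pos hc hβ), mul_neg, ← mul_assoc,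
    div_rpow hc.le hβ.le, mul_div_assoc', ← rpow_one_add' hc.le (by linarith), add_sub_cancel,
    show 1 - s = -(s - 1) by ring, rpow_neg hβ.le, div_eq_mul_inv]

lemma tsum_lintegral_rpow_neg_gammaMeasure_nat_add_two {s r : ℝ} (hs1 : 1 < s) (hs2 : s < 2)
    (hr : 0 < r) :
    ∑' k : ℕ, ∫⁻ x, ENNReal.ofReal (x ^ (-s)) ∂gammaMeasure (k + 2) r
      = ENNReal.ofReal (r * ∫ q in Ioi 0, q ^ (-s) * (1 - exp (-r * q))) := by
  have hdens : ∀ x, ENNReal.ofReal (r * (1 - exp (-r * x))) * ENNReal.ofReal (x ^ (-s))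
      = (Ioi 0).indicator (fun q => ENNReal.ofReal (r * (q ^ (-s) * (1 - exp (-r * q))))) x := by
    intro x
    rcases le_or_gt x 0 with hx | hx
    · have hneg : r * (1 - exp (-r * x)) ≤ 0 :=
        mul_nonpos_of_nonneg_of_nonpos hr.le (by nlinarith [add_one_le_exp (-r * x)])
      rw [ENNReal.ofReal_of_nonpos hneg, zero_mul,
        indicator_of_notMem (show x ∉ Ioi 0 from not_lt.2 hx)]
    · obtain ⟨h0, -⟩ := one_sub_exp_neg_mul_mem_Icc hr.le hx.le
      rw [indicator_of_mem (show x ∈ Ioi 0 from hx), ← ENNReal.ofReal_mul (by positivity)]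
      ring_nf
  have hint := (integrableOn_rpow_neg_mul_one_sub_exp hs1 hs2 hr).const_mul r
  rw [← lintegral_sum_measure, sum_gammaMeasure_nat_add_two hr,
    lintegral_withDensity_eq_lintegral_mul _ (by fun_prop) (by fun_prop)]
  simp only [Pi.mul_apply, hdens]
  rw [lintegral_indicator measurableSet_Ioi, ← integral_const_mul,
    ofReal_integral_eq_lintegral_ofReal hint]
  filter_upwards [ae_restrict_mem measurableSet_Ioi] with q (hq : 0 < q)
  obtain ⟨h0, -⟩ := one_sub_exp_neg_mul_mem_Icc hr.le hq.le
  exact mul_nonneg hr.le (by positivity)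

lemma Gamma_neg_of_neg_one_lt_of_neg {x : ℝ} (h1 : -1 < x) (h0 : x < 0) : Gamma x < 0 := by
  have hpos := Gamma_pos_of_pos (show 0 < x + 1 by linarith)
  rw [Gamma_add_one h0.ne] at hpos
  exact neg_of_mul_pos_right hpos h0.le

lemma ae_nonneg_gammaMeasure (a r : ℝ) : ∀ᵐ x ∂gammaMeasure a r, 0 ≤ x := by
  rw [ae_iff]
  simp only [not_le]
  change gammaMeasure a r (Iio 0) = 0
  rw [gammaMeasure, withDensity_apply _ measurableSet_Iio]
  exact lintegral_gammaPDF_of_nonpos le_rfl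

lemma lintegral_ofReal_gammaMeasure {a r : ℝ} (ha : 0 < a) (hr : 0 < r) :
    ∫⁻ x, ENNReal.ofReal x ∂gammaMeasure a r = ENNReal.ofReal (a / r) := by
  have hpdf : ∀ x, gammaPDF a r x * ENNReal.ofReal x
      = ENNReal.ofReal (a / r) * gammaPDF (a + 1) r x := by
    intro x
    rcases le_or_gt 0 x with hx | hx
    · have hxa : x ^ (a - 1) * x = x ^ a := by
        rw [← rpow_add_one' hx (by simp [ha.ne']), sub_add_cancel]
      rw [gammaPDF_of_nonneg hx, gammaPDF_of_nonneg hx, ← ENNReal.ofReal_mul (by positivity),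
        ← ENNReal.ofReal_mul (by positivity), Gamma_add_one ha.ne', rpow_add_one hr.ne',
        add_sub_cancel_right, ← hxa]
      congr 1
      field_simp
    · simp [gammaPDF_of_neg hx, ENNReal.ofReal_of_nonpos hx.le]
  rw [gammaMeasure, lintegral_withDensity_eq_lintegral_mul _ (f := gammaPDF a r)
    (measurable_gammaPDFReal a r).ennreal_ofReal (g := ENNReal.ofReal) ENNReal.measurable_ofReal]
  simp only [Pi.mul_apply, hpdf]
  have hmeas : Measurable (gammaPDF (a + 1) r) := (measurable_gammaPDFReal _ r).ennreal_ofReal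
  rw [lintegral_const_mul _ hmeas,
    lintegral_gammaPDF_eq_one (by linarith) hr, mul_one]

lemma ae_nonneg_smul_dirac_zero_add_smul_dirac_one (p q : ℝ≥0∞) :
    ∀ᵐ x ∂(p • Measure.dirac (0 : ℝ) + q • Measure.dirac 1), 0 ≤ x :=
  ae_add_measure_iff.2 ⟨Measure.ae_smul_measure ((ae_dirac_iff measurableSet_Ici).2 le_rfl) p,
    Measure.ae_smul_measure ((ae_dirac_iff measurableSet_Ici).2 zero_le_one) q⟩

lemma lintegral_ofReal_smul_dirac_zero_add_smul_dirac_one (p q : ℝ≥0∞) :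
    ∫⁻ x, ENNReal.ofReal x ∂(p • Measure.dirac (0 : ℝ) + q • Measure.dirac 1) = q := by
  simp [lintegral_add_measure, lintegral_smul_measure]

section Independence

variable {Ω : Type*} [MeasurableSpace Ω]

lemma ae_nonneg_of_map_eq {P : Measure Ω} {μ : Measure ℝ} {X : Ω → ℝ} (hX : Measurable X)
    (hmap : P.map X = μ) (hμ : ∀ᵐ x ∂μ, 0 ≤ x) : 0 ≤ᵐ[P] X :=
  ae_of_ae_map (p := (0 ≤ ·)) hX.aemeasurable (hmap ▸ hμ)

lemma lintegral_comp_mul_comp_mul_comp_of_iIndepFun {α : Type*} [MeasurableSpace α]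
    {P : Measure Ω} {X Y Z : Ω → α} (hX : Measurable X) (hY : Measurable Y)
    (hZ : Measurable Z) (hind : iIndepFun ![X, Y, Z] P) {f g k : α → ℝ≥0∞}
    (hf : Measurable f) (hg : Measurable g) (hk : Measurable k) :
    ∫⁻ ω, f (X ω) * g (Y ω) * k (Z ω) ∂P
      = (∫⁻ x, f x ∂P.map X) * (∫⁻ y, g y ∂P.map Y) * ∫⁻ z, k z ∂P.map Z := by
  have hcomp : iIndepFun (fun j => ![f, g, k] j ∘ ![X, Y, Z] j) P :=
    hind.comp _ fun j => by fin_cases j <;> assumption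
  have := lintegral_prod_eq_prod_lintegral_of_indepFun Finset.univ _ hcomp
    fun j => by fin_cases j <;> [exact hf.comp hX; exact hg.comp hY; exact hk.comp hZ]
  simp only [Fin.prod_univ_three, Function.comp_apply, Matrix.cons_val] at this
  rw [this, lintegral_map hf hX, lintegral_map hg hY, lintegral_map hk hZ]

lemma lintegral_ofReal_rpow_mul_mul_of_iIndepFun {P : Measure Ω}
    {X Y Z : Ω → ℝ} (hX : Measurable X) (hY : Measurable Y) (hZ : Measurable Z)
    (hind : iIndepFun ![X, Y, Z] P) (hX0 : 0 ≤ᵐ[P] X) (hY0 : 0 ≤ᵐ[P] Y) (t : ℝ) :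
    ∫⁻ ω, ENNReal.ofReal (X ω ^ t * Y ω * Z ω) ∂P
      = (∫⁻ x, ENNReal.ofReal (x ^ t) ∂P.map X) * (∫⁻ y, ENNReal.ofReal y ∂P.map Y)
        * ∫⁻ z, ENNReal.ofReal z ∂P.map Z := by
  rw [← lintegral_comp_mul_comp_mul_comp_of_iIndepFun hX hY hZ hind (by fun_prop)
    ENNReal.measurable_ofReal ENNReal.measurable_ofReal]
  refine lintegral_congr_ae ?_
  filter_upwards [hX0, hY0] with ω hXω hYω
  rw [ENNReal.ofReal_mul (mul_nonneg (rpow_nonneg hXω t) hYω),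
    ENNReal.ofReal_mul (rpow_nonneg hXω t)]

lemma lintegral_ofReal_rpow_mul_mul_of_gammaMeasure {P : Measure Ω} {X Y Z : Ω → ℝ}
    (hX : Measurable X) (hY : Measurable Y) (hZ : Measurable Z) (hind : iIndepFun ![X, Y, Z] P)
    {a r : ℝ} {p q : ℝ≥0∞} (hXlaw : P.map X = gammaMeasure a r) (hYlaw : P.map Y = expMeasure 1)
    (hZlaw : P.map Z = p • Measure.dirac 0 + q • Measure.dirac 1) (t : ℝ) :
    ∫⁻ ω, ENNReal.ofReal (X ω ^ t * Y ω * Z ω) ∂P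
      = (∫⁻ x, ENNReal.ofReal (x ^ t) ∂gammaMeasure a r) * q := by
  rw [lintegral_ofReal_rpow_mul_mul_of_iIndepFun hX hY hZ hind
      (ae_nonneg_of_map_eq hX hXlaw (ae_nonneg_gammaMeasure a r))
      (ae_nonneg_of_map_eq hY hYlaw (ae_nonneg_gammaMeasure 1 1)),
    hXlaw, hYlaw, hZlaw, expMeasure, lintegral_ofReal_gammaMeasure one_pos one_pos,
    lintegral_ofReal_smul_dirac_zero_add_smul_dirac_one, div_one, ENNReal.ofReal_one, mul_one]

lemma ae_summable_and_integral_tsum_of_nonneg {μ : Measure Ω}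
    {f : ℕ → Ω → ℝ} (hf : ∀ k, AEMeasurable (f k) μ) (hf0 : ∀ k, 0 ≤ᵐ[μ] f k)
    (hfin : ∑' k, ∫⁻ ω, ENNReal.ofReal (f k ω) ∂μ ≠ ∞) :
    (∀ᵐ ω ∂μ, Summable fun k => f k ω) ∧
      ∫ ω, ∑' k, f k ω ∂μ = (∑' k, ∫⁻ ω, ENNReal.ofReal (f k ω) ∂μ).toReal := by
  have hf0' : ∀ᵐ ω ∂μ, ∀ k, 0 ≤ f k ω := ae_all_iff.2 hf0
  have hofReal : ∀ k, AEMeasurable (fun ω => ENNReal.ofReal (f k ω)) μ :=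
    fun k => (hf k).ennreal_ofReal
  constructor
  · have hlt : ∀ᵐ ω ∂μ, ∑' k, ENNReal.ofReal (f k ω) < ∞ :=
      ae_lt_top' (AEMeasurable.tsum hofReal) (by rwa [lintegral_tsum hofReal])
    filter_upwards [hlt, hf0'] with ω hω hω0
    exact (ENNReal.summable_toReal hω.ne).congr fun k => ENNReal.toReal_ofReal (hω0 k)
  · have henorm : ∀ k, ∫⁻ ω, ‖f k ω‖ₑ ∂μ = ∫⁻ ω, ENNReal.ofReal (f k ω) ∂μ := fun k =>
      lintegral_congr_ae <| (hf0 k).mono fun ω hω => Real.enorm_of_nonneg hω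
    rw [integral_tsum (fun k => (hf k).aestronglyMeasurable) (by simpa only [henorm]),
      ENNReal.tsum_toReal_eq (ENNReal.ne_top_of_tsum_ne_top hfin)]
    exact tsum_congr fun k => integral_eq_lintegral_of_nonneg_ae (hf0 k) (hf k).aestronglyMeasurable

end Independence

theorem ginibre_mean_interference_unbounded_general {Ω : Type*} [MeasurableSpace Ω] (P : Measure Ω)
    (α c β : ℝ) (hα2 : 2 < α) (hα4 : α < 4) (hc : 0 < c)
    (hβ0 : 0 < β)
    (Q h T : ℕ → Ω → ℝ)
    (hQm : ∀ k, Measurable (Q k)) (hhm : ∀ k, Measurable (h k)) (hTm : ∀ k, Measurable (T k))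
    (hQ : ∀ k : ℕ, Measure.map (Q k) P = gammaMeasure (k + 2) (c / β))
    (hh : ∀ k : ℕ, Measure.map (h k) P = expMeasure 1)
    (hT : ∀ k : ℕ, Measure.map (T k) P
      = ENNReal.ofReal (1 - β) • Measure.dirac (0 : ℝ) + ENNReal.ofReal β • Measure.dirac 1)
    (hIndep : iIndepFun
      (fun p : ℕ × Fin 3 => ![Q p.1, h p.1, T p.1] p.2) P) :
    (∀ᵐ ω ∂P, Summable fun k : ℕ => (Q k ω) ^ (-(α / 2)) * h k ω * T k ω) ∧
    Real.Gamma (1 - α / 2) < 0 ∧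
    ∫ ω, (∑' k : ℕ, (Q k ω) ^ (-(α / 2)) * h k ω * T k ω) ∂P
      = -(c ^ (α / 2) * β ^ (1 - α / 2) * Real.Gamma (1 - α / 2)) ∧
    c * ∫ q in Ioi (0 : ℝ), q ^ (-(α / 2)) * (1 - Real.exp (-(c / β) * q))
      = -(c ^ (α / 2) * β ^ (1 - α / 2) * Real.Gamma (1 - α / 2)) := by
  have hs1 : 1 < α / 2 := by linarith
  have hs2 : α / 2 < 2 := by linarith
  have hr : 0 < c / β := div_pos hc hβ0
  have hΓ : Gamma (1 - α / 2) < 0 := Gamma_neg_of_neg_one_lt_of_neg (by linarith) (by linarith)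
  have hJ := mul_integral_rpow_neg_mul_one_sub_exp_div hs1 hs2 hc hβ0
  have hQ0 k := ae_nonneg_of_map_eq (hQm k) (hQ k) (ae_nonneg_gammaMeasure _ _)
  have hh0 k := ae_nonneg_of_map_eq (hhm k) (hh k) (ae_nonneg_gammaMeasure 1 1)
  have hT0 k :=
    ae_nonneg_of_map_eq (hTm k) (hT k) (ae_nonneg_smul_dirac_zero_add_smul_dirac_one _ _)
  have hmean : ∑' k : ℕ, ∫⁻ ω, ENNReal.ofReal (Q k ω ^ (-(α / 2)) * h k ω * T k ω) ∂P
      = ENNReal.ofReal (c * ∫ q in Ioi (0 : ℝ), q ^ (-(α / 2)) * (1 - exp (-(c / β) * q))) := by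
    rw [tsum_congr fun k => lintegral_ofReal_rpow_mul_mul_of_gammaMeasure (hQm k) (hhm k) (hTm k)
        (hIndep.precomp (Prod.mk_right_injective k) :) (hQ k) (hh k) (hT k) _,
      ENNReal.tsum_mul_right, tsum_lintegral_rpow_neg_gammaMeasure_nat_add_two hs1 hs2 hr,
      ← ENNReal.ofReal_mul' hβ0.le]
    congr 1
    field_simp
  obtain ⟨hsum, hint⟩ := ae_summable_and_integral_tsum_of_nonneg (fun k => by fun_prop)
    (fun k => by
      filter_upwards [hQ0 k, hh0 k, hT0 k] with ω hQω hhω hTω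
      exact mul_nonneg (mul_nonneg (rpow_nonneg hQω _) hhω) hTω)
    (hmean ▸ ENNReal.ofReal_ne_top)
  refine ⟨hsum, hΓ, ?_, hJ⟩
  rw [hint, hmean, hJ, ENNReal.toReal_ofReal (neg_nonneg.2 (mul_nonpos_of_nonneg_of_nonpos
    (by positivity) hΓ.le))]

/-- Mean interference at the typical point of a β-Ginibre wireless network with unbounded
path loss `ℓ(r) = r^{−α}`, `2 < α < 4`: with `Q_k ~ Gamma(k, rate c/β)`, `h_k ~ Exp(1)`,
`T_k ~ Bernoulli(β)` (`k ≥ 2`, encoded as `k+2` for `k : ℕ`) mutually independent, the series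
`I = Σ_{k≥2} Q_k^{−α/2} h_k T_k` converges a.s. and `E[I] = −c^{α/2} β^{1−α/2} Γ(1−α/2)`,
where `Γ(1−α/2) < 0` is the Gamma function (analytically continued to `1−α/2 ∈ (−1,0)`);
equivalently, `c ∫₀^∞ q^{−α/2}(1 − e^{−(c/β)q}) dq = −c^{α/2} β^{1−α/2} Γ(1−α/2)`. -/
theorem ginibre_mean_interference_unbounded {Ω : Type*} [MeasurableSpace Ω] (P : Measure Ω)
    [IsProbabilityMeasure P] (α c β : ℝ) (hα2 : 2 < α) (hα4 : α < 4) (hc : 0 < c)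
    (hβ0 : 0 < β) (hβ1 : β ≤ 1)
    (Q h T : ℕ → Ω → ℝ)
    (hQm : ∀ k, Measurable (Q k)) (hhm : ∀ k, Measurable (h k)) (hTm : ∀ k, Measurable (T k))
    (hQ : ∀ k : ℕ, Measure.map (Q k) P = gammaMeasure (k + 2) (c / β))
    (hh : ∀ k : ℕ, Measure.map (h k) P = expMeasure 1)
    (hT : ∀ k : ℕ, Measure.map (T k) P
      = ENNReal.ofReal (1 - β) • Measure.dirac (0 : ℝ) + ENNReal.ofReal β • Measure.dirac 1)
    (hIndep : iIndepFun
      (fun p : ℕ × Fin 3 => ![Q p.1, h p.1, T p.1] p.2) P) :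
    (∀ᵐ ω ∂P, Summable fun k : ℕ => (Q k ω) ^ (-(α / 2)) * h k ω * T k ω) ∧
    Real.Gamma (1 - α / 2) < 0 ∧
    ∫ ω, (∑' k : ℕ, (Q k ω) ^ (-(α / 2)) * h k ω * T k ω) ∂P
      = -(c ^ (α / 2) * β ^ (1 - α / 2) * Real.Gamma (1 - α / 2)) ∧
    c * ∫ q in Ioi (0 : ℝ), q ^ (-(α / 2)) * (1 - Real.exp (-(c / β) * q))
      = -(c ^ (α / 2) * β ^ (1 - α / 2) * Real.Gamma (1 - α / 2)) :=
  ginibre_mean_interference_unbounded_general P α c β hα2 hα4 hc hβ0 Q h T hQm hhm hTm hQ hh hT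
    hIndep
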